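/- arXiv:2005.03942 — 4 statements merged into one kernel-verified Lean document; each statement's English description precedes it below -/
import Mathlib

section
/- If G is a permutation group on a finite set Ω of size t with minimum base size b, then every independent set in Ω has size at most b · log₂ t. Consequently H(G) ≤ b(G) · log₂ t. -/
/-- The pointwise stabilizer of a set `Λ` in a group `G` acting on `Ω`. -/
def ptStab (G : Type*) [Group G] {Ω : Type*} [MulAction G Ω] (Λ : Set Ω) : Subgroup G :=
  ⨅ ω ∈ Λ, MulAction.stabilizer G ω

/-- `Λ` is an independent set: its pointwise stabilizer differs from that of
every proper subset. -/
def IsIndep (G : Type*) [Group G] {Ω : Type*} [MulAction G Ω] (Λ : Set Ω) : Prop :=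
  ∀ Δ : Set Ω, Δ ⊂ Λ → ptStab G Δ ≠ ptStab G Λ

/-- The height of `G` on `Ω`: the maximum size of an independent set. -/
noncomputable def height (G : Type*) [Group G] (Ω : Type*) [MulAction G Ω] : ℕ :=
  sSup {k | ∃ Λ : Set Ω, IsIndep G Λ ∧ Λ.ncard = k}

/-! A base `B` embeds `G` into the maps `B → Ω`, so `|G| ≤ t ^ |B|`. Along an independent set
`Λ`, removing points one at a time gives a strictly increasing chain of `|Λ| + 1` pointwise
stabilizers, each of index at least `2` in the next by Lagrange, so `2 ^ |Λ| ≤ |G|`. Taking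
`log₂` of `2 ^ |Λ| ≤ t ^ b` gives the bound. -/

theorem Subgroup.two_mul_card_le_card_of_lt {G : Type*} [Group G] {H K : Subgroup G}
    [Finite K] (hHK : H < K) : 2 * Nat.card H ≤ Nat.card K := by
  obtain ⟨k, hk⟩ := Subgroup.card_dvd_of_le hHK.le
  have hk0 : k ≠ 0 := by
    rintro rfl
    exact Nat.card_pos.ne' (hk.trans (mul_zero _))
  have hk1 : k ≠ 1 := by
    rintro rfl
    exact hHK.ne (Subgroup.eq_of_le_of_card_ge hHK.le (by rw [hk, mul_one]))
  rw [hk, mul_comm 2]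
  exact Nat.mul_le_mul_left (Nat.card H) (show 2 ≤ k by omega)

section ptStab

variable {G Ω : Type*} [Group G] [MulAction G Ω]

theorem mem_ptStab {g : G} {Λ : Set Ω} : g ∈ ptStab G Λ ↔ ∀ ω ∈ Λ, g • ω = ω := by
  simp [ptStab, Subgroup.mem_iInf, MulAction.mem_stabilizer_iff]

@[simp]
theorem ptStab_empty : ptStab G (∅ : Set Ω) = ⊤ := by
  simp [ptStab]

theorem ptStab_union (A B : Set Ω) : ptStab G (A ∪ B) = ptStab G A ⊓ ptStab G B :=
  iInf_union

theorem ptStab_anti : Antitone (ptStab G : Set Ω → Subgroup G) :=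
  fun _ _ h => biInf_mono h

theorem smul_injective_of_ptStab_eq_bot {B : Set Ω} (hB : ptStab G B = ⊥) :
    Function.Injective (fun (g : G) (x : B) => g • (x : Ω)) := by
  intro g h hgh
  have : h⁻¹ * g ∈ ptStab G B := mem_ptStab.2 fun ω hω => by
    rw [mul_smul, show g • ω = h • ω from congrFun hgh ⟨ω, hω⟩, inv_smul_smul]
  rwa [hB, Subgroup.mem_bot, inv_mul_eq_one, eq_comm] at this

theorem card_le_pow_ncard_of_ptStab_eq_bot [Finite Ω] {B : Set Ω} (hB : ptStab G B = ⊥) :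
    Nat.card G ≤ Nat.card Ω ^ B.ncard := by
  rw [← Nat.card_coe_set_eq, ← Nat.card_fun]
  exact Nat.card_le_card_of_injective _ (smul_injective_of_ptStab_eq_bot hB)

theorem IsIndep.mono {Λ Λ' : Set Ω} (hΛ : IsIndep G Λ) (hsub : Λ' ⊆ Λ) : IsIndep G Λ' := by
  intro Δ hΔ heq
  refine hΛ (Δ ∪ (Λ \ Λ')) ?_ ?_
  · obtain ⟨x, hxΛ', hxΔ⟩ := Set.exists_of_ssubset hΔ
    refine (Set.ssubset_iff_of_subset
      (Set.union_subset (hΔ.subset.trans hsub) Set.sdiff_subset)).2 ⟨x, hsub hxΛ', ?_⟩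
    rintro (hx | hx)
    · exact hxΔ hx
    · exact hx.2 hxΛ'
  · rw [ptStab_union, heq, ← ptStab_union, Set.union_sdiff_cancel hsub]

theorem IsIndep.ptStab_lt_of_ssubset {Λ Δ : Set Ω} (hΛ : IsIndep G Λ) (hΔ : Δ ⊂ Λ) :
    ptStab G Λ < ptStab G Δ :=
  (ptStab_anti hΔ.subset).lt_of_ne' (hΛ Δ hΔ)

theorem IsIndep.two_pow_ncard_mul_card_le [Finite G] {Λ : Set Ω} (hΛ : IsIndep G Λ)
    (hfin : Λ.Finite) : 2 ^ Λ.ncard * Nat.card (ptStab G Λ) ≤ Nat.card G := by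
  induction Λ, hfin using Set.Finite.induction_on with
  | empty => simp
  | @insert ω Λ hω hfin ih =>
    have hlt := hΛ.ptStab_lt_of_ssubset (Set.ssubset_insert hω)
    calc 2 ^ (insert ω Λ).ncard * Nat.card (ptStab G (insert ω Λ))
        = 2 ^ Λ.ncard * (2 * Nat.card (ptStab G (insert ω Λ))) := by
          rw [Set.ncard_insert_of_notMem hω hfin, pow_succ, mul_assoc]
      _ ≤ 2 ^ Λ.ncard * Nat.card (ptStab G Λ) :=
          Nat.mul_le_mul_left _ (Subgroup.two_mul_card_le_card_of_lt hlt)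
      _ ≤ Nat.card G := ih (hΛ.mono (Set.subset_insert ω Λ))

theorem isIndep_empty : IsIndep G (∅ : Set Ω) :=
  fun Δ hΔ => (hΔ.2 Δ.empty_subset).elim

theorem exists_isIndep_ncard_eq_height [Finite Ω] :
    ∃ Λ : Set Ω, IsIndep G Λ ∧ Λ.ncard = height G Ω :=
  Nat.sSup_mem (s := {k | ∃ Λ : Set Ω, IsIndep G Λ ∧ Λ.ncard = k})
    ⟨0, ∅, isIndep_empty, Set.ncard_empty Ω⟩
    ⟨Nat.card Ω, fun _ ⟨Λ, _, hk⟩ => hk ▸ Λ.ncard_le_card⟩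

end ptStab

theorem le_mul_logb_of_two_pow_le_pow {n b t : ℕ} (h : 2 ^ n ≤ t ^ b) :
    (n : ℝ) ≤ b * Real.logb 2 t := by
  have h' : (2 : ℝ) ^ n ≤ (t : ℝ) ^ b := by exact_mod_cast h
  have := Real.logb_le_logb_of_le one_lt_two (by positivity) h'
  rwa [Real.logb_pow, Real.logb_pow, Real.logb_self_eq_one one_lt_two, mul_one] at this

theorem indep_le_base_mul_log_general {G Ω : Type*} [Group G] [Finite Ω] [MulAction G Ω]
    (b : ℕ) (B : Set Ω)
    (hB : ptStab G B = ⊥) (hBcard : B.ncard = b) :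
    (∀ Λ : Set Ω, IsIndep G Λ → (Λ.ncard : ℝ) ≤ b * Real.logb 2 (Nat.card Ω)) ∧
    (height G Ω : ℝ) ≤ b * Real.logb 2 (Nat.card Ω) := by
  have hG : Nat.card G ≤ Nat.card Ω ^ b := hBcard ▸ card_le_pow_ncard_of_ptStab_eq_bot hB
  have : Finite G := Finite.of_injective _ (smul_injective_of_ptStab_eq_bot hB)
  have hindep (Λ : Set Ω) (hΛ : IsIndep G Λ) : (Λ.ncard : ℝ) ≤ b * Real.logb 2 (Nat.card Ω) := by
    refine le_mul_logb_of_two_pow_le_pow (le_trans ?_ hG)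
    exact (Nat.le_mul_of_pos_right _ Nat.card_pos).trans
      (hΛ.two_pow_ncard_mul_card_le Λ.toFinite)
  refine ⟨hindep, ?_⟩
  obtain ⟨Λ, hΛ, hcard⟩ := exists_isIndep_ncard_eq_height (G := G) (Ω := Ω)
  exact hcard ▸ hindep Λ hΛ

/-- If `b` is the minimum base size of `G` on `Ω` (with `|Ω| = t`), then every
independent set has size at most `b · log₂ t`; hence `H(G) ≤ b(G) · log₂ t`. -/
theorem indep_le_base_mul_log {G Ω : Type*} [Group G] [Finite Ω] [MulAction G Ω]
    [FaithfulSMul G Ω] (b : ℕ) (B : Set Ω)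
    (hB : ptStab G B = ⊥) (hBcard : B.ncard = b)
    (hbmin : ∀ B' : Set Ω, ptStab G B' = ⊥ → b ≤ B'.ncard) :
    (∀ Λ : Set Ω, IsIndep G Λ → (Λ.ncard : ℝ) ≤ b * Real.logb 2 (Nat.card Ω)) ∧
    (height G Ω : ℝ) ≤ b * Real.logb 2 (Nat.card Ω) :=
  indep_le_base_mul_log_general b B hB hBcard
end

section
/- The relational complexity of a finite permutation group G on Ω satisfies RC(G) ≤ H(G) + 1, where H(G) is the height (maximum size of an independent set). -/
/-- `I ∼_r J`: every subtuple of size `r` of `I` can be mapped by an element of `G`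
to the corresponding subtuple of `J`. -/
def REquiv (G : Type*) [Group G] {Ω : Type*} [MulAction G Ω] {n : ℕ} (r : ℕ)
    (I J : Fin n → Ω) : Prop :=
  ∀ k : Fin r → Fin n, ∃ h : G, ∀ i : Fin r, h • I (k i) = J (k i)

/-- The relational complexity of `G` on `Ω`: the least `r` such that for every `n ≥ r`,
`r`-equivalence of `n`-tuples implies `n`-equivalence. -/
noncomputable def relComplexity (G : Type*) [Group G] (Ω : Type*) [MulAction G Ω] : ℕ :=
  sInf {r | ∀ n : ℕ, r ≤ n → ∀ I J : Fin n → Ω, REquiv G r I J → REquiv G n I J}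

/-!
Shrink the set of entries of `I` to an independent subset `Δ` with the same pointwise
stabilizer, so that `|Δ| ≤ H(G)`. By `(H(G) + 1)`-equivalence some `g` maps `I` to `J` on the
indices over `Δ`, and for each index `i` some `gᵢ` does so on those indices together with `i`.
Then `gᵢ⁻¹ g` fixes `Δ`, hence every entry of `I`, pointwise, so `g • I i = gᵢ • I i = J i`.
-/

open Set

section

variable {G Ω : Type*} [Group G] [MulAction G Ω]

theorem mem_ptStab_iff {Λ : Set Ω} {g : G} : g ∈ ptStab G Λ ↔ ∀ ω ∈ Λ, g • ω = ω := by
  simp [ptStab, Subgroup.mem_iInf, MulAction.mem_stabilizer_iff]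

theorem smul_eq_smul_of_ptStab_le {Δ Λ : Set Ω} (hΔΛ : ptStab G Δ ≤ ptStab G Λ) {g g' : G}
    (h : ∀ ω ∈ Δ, g • ω = g' • ω) : ∀ ω ∈ Λ, g • ω = g' • ω := by
  have hΛ : g'⁻¹ * g ∈ ptStab G Λ :=
    hΔΛ <| mem_ptStab_iff.2 fun ω hω => by rw [mul_smul, h ω hω, inv_smul_smul]
  intro ω hω
  calc g • ω = g' • (g'⁻¹ * g) • ω := by rw [mul_smul, smul_inv_smul]
    _ = g' • ω := by rw [mem_ptStab_iff.1 hΛ ω hω]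

theorem Set.Finite.exists_isIndep_subset_ptStab_eq {Λ : Set Ω} (hΛ : Λ.Finite) :
    ∃ Δ ⊆ Λ, IsIndep G Δ ∧ ptStab G Δ = ptStab G Λ := by
  obtain ⟨Δ, ⟨hΔΛ, hΔ⟩, hmin⟩ :=
    (hΛ.finite_subsets.subset fun _ h => h.1 : {Δ | Δ ⊆ Λ ∧ ptStab G Δ = ptStab G Λ}.Finite)
      |>.exists_minimal ⟨Λ, subset_rfl, rfl⟩
  refine ⟨Δ, hΔΛ, fun Δ' hΔ' heq => hΔ'.not_subset ?_, hΔ⟩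
  exact hmin ⟨hΔ'.subset.trans hΔΛ, heq.trans hΔ⟩ hΔ'.subset

theorem IsIndep.ncard_le_height [Finite Ω] {Λ : Set Ω} (hΛ : IsIndep G Λ) :
    Λ.ncard ≤ height G Ω :=
  le_csSup ⟨Nat.card Ω, by rintro _ ⟨Λ', -, rfl⟩; exact Λ'.ncard_le_card⟩ ⟨Λ, hΛ, rfl⟩

theorem Set.Finite.exists_subset_range_fin {α : Type*} {t : Set α} {r : ℕ} (ht : t.Finite)
    (htr : t.ncard ≤ r) (hne : t.Nonempty) : ∃ k : Fin r → α, t ⊆ range k := by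
  obtain ⟨a, -⟩ := hne
  refine ⟨fun i => ht.toFinset.toList.getD i a, fun x hx => ?_⟩
  obtain ⟨i, hi, rfl⟩ := List.mem_iff_getElem.1 (Finset.mem_toList.2 (ht.mem_toFinset.2 hx))
  have hir : i < r := by
    rw [Finset.length_toList, ← ncard_eq_toFinset_card t ht] at hi; omega
  exact ⟨⟨i, hir⟩, List.getD_eq_getElem _ _ hi⟩

theorem REquiv.exists_smul_eq_on {n r : ℕ} {I J : Fin n → Ω} (hIJ : REquiv G r I J)
    {t : Set (Fin n)} (ht : t.ncard ≤ r) : ∃ g : G, ∀ j ∈ t, g • I j = J j := by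
  rcases t.eq_empty_or_nonempty with rfl | hne
  · exact ⟨1, by simp⟩
  obtain ⟨k, hk⟩ := t.toFinite.exists_subset_range_fin ht hne
  obtain ⟨g, hg⟩ := hIJ k
  refine ⟨g, fun j hj => ?_⟩
  obtain ⟨i, rfl⟩ := hk hj
  exact hg i

end

theorem relComplexity_le_height_add_one_general {G Ω : Type*} [Group G] [Finite Ω]
    [MulAction G Ω] :
    relComplexity G Ω ≤ height G Ω + 1 := by
  refine Nat.sInf_le fun n _ I J hIJ => ?_
  obtain ⟨Δ, hΔI, hΔ, hstab⟩ := (finite_range I).exists_isIndep_subset_ptStab_eq (G := G)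
  obtain ⟨t, -, hbij⟩ := exists_subset_bijOn (I ⁻¹' Δ) I
  rw [image_preimage_eq_of_subset hΔI] at hbij
  have ht : t.ncard ≤ height G Ω := by
    rw [← hbij.injOn.ncard_image, hbij.image_eq]; exact hΔ.ncard_le_height
  obtain ⟨g, hg⟩ := hIJ.exists_smul_eq_on (ht.trans (Nat.le_succ _))
  refine fun k => ⟨g, fun a => ?_⟩
  obtain ⟨g', hg'⟩ := hIJ.exists_smul_eq_on ((ncard_insert_le (k a) t).trans (by omega))
  refine (smul_eq_smul_of_ptStab_le hstab.le ?_ _ (mem_range_self _)).trans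
    (hg' _ (mem_insert _ _))
  rw [← hbij.image_eq]
  rintro _ ⟨j, hj, rfl⟩
  rw [hg j hj, hg' j (mem_insert_of_mem _ hj)]

/-- `RC(G) ≤ H(G) + 1`. -/
theorem relComplexity_le_height_add_one {G Ω : Type*} [Group G] [Finite G] [Finite Ω]
    [MulAction G Ω] [FaithfulSMul G Ω] :
    relComplexity G Ω ≤ height G Ω + 1 :=
  relComplexity_le_height_add_one_general
end

section
/- Let G be a permutation group on a finite set Ω and N a normal subgroup of G. Then the maximum irredundant base length satisfies I(G) ≤ I(N) + ℓ(G/N). -/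
/-- The pointwise stabilizer of the first `i` points of the tuple `b`. -/
def prefixStab (G : Type*) [Group G] {Ω : Type*} [MulAction G Ω] {k : ℕ}
    (b : Fin k → Ω) (i : ℕ) : Subgroup G :=
  ⨅ j : Fin k, ⨅ _ : (j : ℕ) < i, MulAction.stabilizer G (b j)

/-- `b` is an irredundant base: the chain of pointwise stabilizers of initial segments
is strictly decreasing and terminates at the trivial group. -/
def IsIrredBase (G : Type*) [Group G] {Ω : Type*} [MulAction G Ω] {k : ℕ}
    (b : Fin k → Ω) : Prop :=
  (∀ i : Fin k, prefixStab G b ((i : ℕ) + 1) < prefixStab G b (i : ℕ)) ∧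
    prefixStab G b k = ⊥

/-- `I(G, Ω)`: the maximum length of an irredundant base. -/
noncomputable def maxIrr (G : Type*) [Group G] (Ω : Type*) [MulAction G Ω] : ℕ :=
  sSup {k | ∃ b : Fin k → Ω, IsIrredBase G b}

/-- `ℓ(G)`: the maximum length of a strictly decreasing chain of subgroups of `G`. -/
noncomputable def chainLen (G : Type*) [Group G] : ℕ :=
  sSup {k | ∃ c : Fin (k + 1) → Subgroup G, StrictAnti c ∧ c 0 = ⊤}

/-!
Let `b` be an irredundant base of `G`, with stabilizer chain `G = G₀ > G₁ > ⋯ > G_k = 1`.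
By Dedekind's law, each step `G_{i+1} < G_i` makes `N ∩ G_{i+1} < N ∩ G_i` or
`G_{i+1}N < G_iN`. The chain `N ∩ G_i` is the stabilizer chain of `b` in `N`, and deleting the
points of `b` at which it does not drop leaves an irredundant base of `N`; so there are at most
`I(N)` steps of the first kind. The steps of the second kind give a strictly decreasing chain of
the subgroups `G_iN/N` of `G/N`, so there are at most `ℓ(G/N)` of them.
-/

namespace Subgroup

variable {G : Type*} [Group G]

theorem eq_of_le_of_inf_le_of_le_sup_of_normal {H K N : Subgroup G} [N.Normal] (hle : H ≤ K)
    (hinf : K ⊓ N ≤ H) (hsup : K ≤ H ⊔ N) : H = K := by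
  refine le_antisymm hle fun x hx => ?_
  obtain ⟨y, hy, z, hz, rfl⟩ := mem_sup_of_normal_right.mp (hsup hx)
  have hzK : z ∈ K := by simpa using K.mul_mem (K.inv_mem (hle hy)) hx
  exact H.mul_mem hy (hinf ⟨hzK, hz⟩)

theorem subgroupOf_lt_or_map_mk_lt {H K N : Subgroup G} [N.Normal] (h : H < K) :
    H.subgroupOf N < K.subgroupOf N ∨
      H.map (QuotientGroup.mk' N) < K.map (QuotientGroup.mk' N) := by
  by_contra! hnot
  have hinf : H ⊓ N = K ⊓ N :=
    subgroupOf_inj.mp ((subgroupOf_mono N h.le).eq_of_not_lt hnot.1)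
  have hsup : H ⊔ N = K ⊔ N := by
    simpa [comap_map_eq] using congrArg (comap (QuotientGroup.mk' N))
      ((map_mono h.le).eq_of_not_lt hnot.2)
  exact h.ne <| eq_of_le_of_inf_le_of_le_sup_of_normal h.le (hinf.ge.trans inf_le_left)
    (le_sup_left.trans hsup.ge)

end Subgroup

open Finset
open scoped Classical

section ChainLength

variable {Q : Type*} [Group Q] [Finite Q]

theorem bddAbove_chainLen :
    BddAbove {k | ∃ c : Fin (k + 1) → Subgroup Q, StrictAnti c ∧ c 0 = ⊤} := by
  refine ⟨Nat.card (Subgroup Q), fun k ⟨c, hc, _⟩ => ?_⟩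
  have := Nat.card_le_card_of_injective c hc.injective
  rw [Nat.card_eq_fintype_card, Fintype.card_fin] at this
  omega

theorem card_strictDrops_le_chainLen {c : ℕ → Subgroup Q} (hc : Antitone c) (k : ℕ) :
    #{i : Fin k | c (i + 1) < c i} ≤ chainLen Q := by
  set D : Finset (Fin k) := {i | c (i + 1) < c i}
  set d := D.orderEmbOfFin rfl
  have hdrop (j : Fin #D) : c (d j + 1) < c (d j) :=
    (mem_filter.mp (D.orderEmbOfFin_mem rfl j)).2
  -- `⊤ ≥ c (d 0) > c (d 0 + 1) ≥ c (d 1) > c (d 1 + 1) ≥ ⋯`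
  set e : Fin (#D + 1) → Subgroup Q := Fin.cons ⊤ fun j => c (d j + 1)
  have hcast (j : Fin #D) : c (d j) ≤ e j.castSucc := by
    rcases Fin.eq_zero_or_eq_succ j.castSucc with h | ⟨i, h⟩
    · simp [e, h]
    · have hij : i < j := by
        have := congrArg Fin.val h
        simp only [Fin.val_castSucc, Fin.val_succ] at this
        omega
      simp only [e, h, Fin.cons_succ]
      exact hc (Nat.succ_le_of_lt (d.strictMono hij))
  refine le_csSup bddAbove_chainLen ⟨e, Fin.strictAnti_iff_succ_lt.mpr fun j => ?_, rfl⟩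
  simpa [e] using (hdrop j).trans_le (hcast j)

end ChainLength

section PrefixStab

variable {G Ω : Type*} [Group G] [MulAction G Ω] {k : ℕ} (b : Fin k → Ω)

theorem mem_prefixStab {i : ℕ} {g : G} :
    g ∈ prefixStab G b i ↔ ∀ j : Fin k, (j : ℕ) < i → g • b j = b j := by
  simp [prefixStab, Subgroup.mem_iInf, MulAction.mem_stabilizer_iff]

theorem prefixStab_antitone : Antitone (prefixStab G b) :=
  fun _ _ hij _ hg =>
    (mem_prefixStab b).mpr fun j hj => (mem_prefixStab b).mp hg j (hj.trans_le hij)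

theorem prefixStab_subgroupOf (N : Subgroup G) (i : ℕ) :
    prefixStab N b i = (prefixStab G b i).subgroupOf N := by
  ext n
  simp [mem_prefixStab, Subgroup.mem_subgroupOf, Subgroup.smul_def]

theorem mem_prefixStab_of_forall_strictDrop {t : ℕ} {g : G}
    (h : ∀ i : Fin k, (i : ℕ) < t → prefixStab G b (i + 1) < prefixStab G b i → g • b i = b i) :
    g ∈ prefixStab G b t := by
  induction t with
  | zero => simp [mem_prefixStab]
  | succ t ih =>
    have hg : g ∈ prefixStab G b t := ih fun i hi => h i (hi.trans t.lt_succ_self)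
    refine (mem_prefixStab b).mpr fun i hi => ?_
    rcases Nat.lt_succ_iff_lt_or_eq.mp hi with hi | rfl
    · exact (mem_prefixStab b).mp hg i hi
    by_cases hdrop : prefixStab G b (i + 1) < prefixStab G b i
    · exact h i hi hdrop
    · have heq := (prefixStab_antitone b i.val.le_succ).eq_of_not_lt hdrop
      exact (mem_prefixStab b).mp (heq ▸ hg) i i.val.lt_succ_self

theorem prefixStab_comp_eq {m : ℕ} {d : Fin m → Fin k}
    (hd : ∀ i : Fin k, prefixStab G b (i + 1) < prefixStab G b i → i ∈ Set.range d) {j t : ℕ}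
    (hjt : ∀ l : Fin m, (l : ℕ) < j ↔ (d l : ℕ) < t) :
    prefixStab G (b ∘ d) j = prefixStab G b t := by
  ext g
  refine ⟨fun hg => mem_prefixStab_of_forall_strictDrop b fun i hi hdrop => ?_, fun hg => ?_⟩
  · obtain ⟨l, rfl⟩ := hd i hdrop
    exact (mem_prefixStab _).mp hg l ((hjt l).mpr hi)
  · exact (mem_prefixStab _).mpr fun l hl => (mem_prefixStab b).mp hg (d l) ((hjt l).mp hl)

theorem le_chainLen_of_isIrredBase [Finite G] {b : Fin k → Ω} (hb : IsIrredBase G b) :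
    k ≤ chainLen G := by
  simpa [hb.1] using card_strictDrops_le_chainLen (prefixStab_antitone (G := G) b) k

theorem bddAbove_maxIrr [Finite G] : BddAbove {k | ∃ b : Fin k → Ω, IsIrredBase G b} :=
  ⟨chainLen G, fun _ ⟨_, hb⟩ => le_chainLen_of_isIrredBase hb⟩

theorem card_strictDrops_le_maxIrr [Finite G] (hb : prefixStab G b k = ⊥) :
    #{i : Fin k | prefixStab G b (i + 1) < prefixStab G b i} ≤ maxIrr G Ω := by
  set D : Finset (Fin k) := {i | prefixStab G b (i + 1) < prefixStab G b i}
  set d := D.orderEmbOfFin rfl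
  have hd (i : Fin k) (hi : prefixStab G b (i + 1) < prefixStab G b i) : i ∈ Set.range d := by
    simp [d, D, hi]
  have hirr : IsIrredBase G (b ∘ d) := by
    refine ⟨fun j => ?_, ?_⟩
    · rw [prefixStab_comp_eq b hd (t := d j + 1), prefixStab_comp_eq b hd (t := d j)]
      · exact (mem_filter.mp (D.orderEmbOfFin_mem rfl j)).2
      · exact fun l => d.lt_iff_lt.symm
      · exact fun l => (Nat.lt_succ_iff.trans d.le_iff_le.symm).trans Nat.lt_succ_iff.symm
    · rw [prefixStab_comp_eq b hd (t := k), hb]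
      exact fun l => iff_of_true l.isLt (d l).isLt
  exact le_csSup bddAbove_maxIrr ⟨b ∘ d, hirr⟩

end PrefixStab

theorem maxIrr_le_maxIrr_normal_add_chainLen_general {G Ω : Type*} [Group G] [Finite G]
    [MulAction G Ω] (N : Subgroup G) [N.Normal] :
    maxIrr G Ω ≤ maxIrr N Ω + chainLen (G ⧸ N) := by
  refine csSup_le' fun k ⟨b, hb⟩ => ?_
  set stabQ : ℕ → Subgroup (G ⧸ N) := fun i => (prefixStab G b i).map (QuotientGroup.mk' N)
  set dropsN : Finset (Fin k) := {i | prefixStab N b (i + 1) < prefixStab N b i}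
  set dropsQ : Finset (Fin k) := {i | stabQ (i + 1) < stabQ i}
  have hNbot : prefixStab N b k = ⊥ := by
    rw [prefixStab_subgroupOf, hb.2, Subgroup.bot_subgroupOf]
  have hcover : univ ⊆ dropsN ∪ dropsQ := fun i _ => by
    simpa [dropsN, dropsQ, stabQ, prefixStab_subgroupOf] using
      Subgroup.subgroupOf_lt_or_map_mk_lt (hb.1 i)
  calc k = #(univ : Finset (Fin k)) := (card_fin k).symm
    _ ≤ #dropsN + #dropsQ := (card_le_card hcover).trans (card_union_le _ _)
    _ ≤ maxIrr N Ω + chainLen (G ⧸ N) :=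
      add_le_add (card_strictDrops_le_maxIrr b hNbot)
        (card_strictDrops_le_chainLen (fun _ _ h => Subgroup.map_mono (prefixStab_antitone b h)) k)

/-- If `N ⊴ G`, then `I(G) ≤ I(N) + ℓ(G/N)`. -/
theorem maxIrr_le_maxIrr_normal_add_chainLen {G Ω : Type*} [Group G] [Finite G] [Finite Ω]
    [MulAction G Ω] [FaithfulSMul G Ω] (N : Subgroup G) [N.Normal] :
    maxIrr G Ω ≤ maxIrr N Ω + chainLen (G ⧸ N) :=
  maxIrr_le_maxIrr_normal_add_chainLen_general N
end

section
/- Let G = Sp_{2m}(q) with q a power of 2 act on the set Ω of quadratic forms θ_a polarising to φ via θ^x(u) = θ(u x^{−1}). For the transvection t_c one has θ_a^{t_c} = θ_{a + (√(θ_a(c)) + 1)c}, where √ denotes the (well-defined) square root in F_q. -/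
open Matrix

/-- The standard symplectic form `φ(u,v) = u f vᵀ` on `F_q^{2m}` given by the block matrix
`f = [[0, I], [I, 0]]`. -/
def sympForm {K : Type*} [Field K] {m : ℕ} (u v : (Fin m ⊕ Fin m) → K) : K :=
  u ⬝ᵥ (Matrix.fromBlocks (0 : Matrix (Fin m) (Fin m) K) 1 1 0).mulVec v

/-- The quadratic form `θ₀(u) = u e uᵀ` given by the block matrix `e = [[0, I], [0, 0]]`. -/
def theta0 {K : Type*} [Field K] {m : ℕ} (u : (Fin m ⊕ Fin m) → K) : K :=
  u ⬝ᵥ (Matrix.fromBlocks (0 : Matrix (Fin m) (Fin m) K) 1 0 0).mulVec u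

/-- The quadratic form `θ_a(u) = θ₀(u) + φ(u,a)²` polarising to `φ`. -/
def thetaA {K : Type*} [Field K] {m : ℕ} (a u : (Fin m ⊕ Fin m) → K) : K :=
  theta0 u + sympForm u a ^ 2

/-- The transvection `t_c : u ↦ u + φ(u,c)c`. -/
def transvection {K : Type*} [Field K] {m : ℕ} (c : (Fin m ⊕ Fin m) → K) :
    ((Fin m ⊕ Fin m) → K) → (Fin m ⊕ Fin m) → K :=
  fun u => u + sympForm u c • c

/-
For any quadratic form `Q` with polar form `β`, expanding `Q (u + t • c)` with `t = β u c` gives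
`Q (t_c u) = Q u + t ^ 2 * (Q c + 1)`. In characteristic 2 the polar form of `θ_a` is `φ` for
every `a`, squaring is additive, and `θ_{a+b} u = θ_a u + φ(u,b)²`; so with `s ^ 2 = θ_a c` the
correction term `t ^ 2 * (s ^ 2 + 1) = ((s + 1) * φ(u,c)) ^ 2` is exactly `θ_{a + (s+1)c} u - θ_a u`.
-/

namespace QuadraticMap

variable {R M : Type*} [CommRing R] [AddCommGroup M] [Module R M]

theorem map_add_polar_smul (Q : QuadraticMap R M R) (u c : M) :
    Q (u + polar Q u c • c) = Q u + polar Q u c ^ 2 * (Q c + 1) := by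
  rw [QuadraticMap.map_add Q u, QuadraticMap.map_smul, polar_smul_right, smul_eq_mul, smul_eq_mul]
  ring

end QuadraticMap

open QuadraticMap

section Symplectic

variable {K : Type*} [Field K] {m : ℕ}

theorem sympForm_add_right (u a b : (Fin m ⊕ Fin m) → K) :
    sympForm u (a + b) = sympForm u a + sympForm u b := by
  simp only [sympForm, mulVec_add, dotProduct_add]

theorem sympForm_smul_right (u c : (Fin m ⊕ Fin m) → K) (k : K) :
    sympForm u (k • c) = k * sympForm u c := by
  simp only [sympForm, mulVec_smul, dotProduct_smul, smul_eq_mul]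

theorem sympForm_add_left (u v a : (Fin m ⊕ Fin m) → K) :
    sympForm (u + v) a = sympForm u a + sympForm v a :=
  add_dotProduct u v _

def theta0Form : QuadraticForm K ((Fin m ⊕ Fin m) → K) :=
  (fromBlocks (0 : Matrix (Fin m) (Fin m) K) 1 0 0).toQuadraticForm'

theorem coe_theta0Form : ⇑(theta0Form : QuadraticForm K ((Fin m ⊕ Fin m) → K)) = theta0 := by
  ext u
  simp [theta0Form, theta0, Matrix.toQuadraticForm', toLinearMap₂'_apply']

-- `f = e + eᵀ`
theorem polar_theta0 (u v : (Fin m ⊕ Fin m) → K) : polar theta0 u v = sympForm u v := by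
  rw [← coe_theta0Form, theta0Form, Matrix.toQuadraticForm', LinearMap.BilinMap.polar_toQuadraticMap,
    toLinearMap₂'_apply', toLinearMap₂'_apply', sympForm, dotProduct_mulVec v, dotProduct_comm _ u,
    ← mulVec_transpose, ← dotProduct_add, ← add_mulVec, fromBlocks_transpose, fromBlocks_add]
  simp

theorem polar_thetaA [CharP K 2] (a u v : (Fin m ⊕ Fin m) → K) :
    polar (thetaA a) u v = sympForm u v := by
  have polar_sq : polar (fun u => sympForm u a ^ 2) u v = 0 := by
    rw [polar, sympForm_add_left, CharTwo.add_sq]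
    ring
  rw [show thetaA a = theta0 + fun u => sympForm u a ^ 2 from rfl, polar_add, polar_theta0,
    polar_sq, add_zero]

def thetaAForm (a : (Fin m ⊕ Fin m) → K) : QuadraticForm K ((Fin m ⊕ Fin m) → K) :=
  theta0Form +
    linMulLin ((toLinearMap₂' K (fromBlocks (0 : Matrix (Fin m) (Fin m) K) 1 1 0)).flip a)
      ((toLinearMap₂' K (fromBlocks (0 : Matrix (Fin m) (Fin m) K) 1 1 0)).flip a)

theorem coe_thetaAForm (a : (Fin m ⊕ Fin m) → K) : ⇑(thetaAForm a) = thetaA a := by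
  ext u
  simp [thetaAForm, coe_theta0Form, thetaA, sympForm, toLinearMap₂'_apply', _root_.sq]

theorem thetaA_transvection_eq_add [CharP K 2] (a c u : (Fin m ⊕ Fin m) → K) :
    thetaA a (transvection c u) = thetaA a u + sympForm u c ^ 2 * (thetaA a c + 1) := by
  show thetaA a (u + sympForm u c • c) = _
  simpa only [coe_thetaAForm, polar_thetaA] using (thetaAForm a).map_add_polar_smul u c

theorem thetaA_add_right [CharP K 2] (a b u : (Fin m ⊕ Fin m) → K) :
    thetaA (a + b) u = thetaA a u + sympForm u b ^ 2 := by
  rw [thetaA, thetaA, sympForm_add_right, CharTwo.add_sq, add_assoc]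

end Symplectic

theorem thetaA_transvection_general {K : Type*} [Field K] [CharP K 2] (m : ℕ)
    (a c : (Fin m ⊕ Fin m) → K) (s : K) (hs : s ^ 2 = thetaA a c) :
    ∀ u, thetaA a (transvection c u) = thetaA (a + (s + 1) • c) u := by
  intro u
  calc thetaA a (transvection c u)
      = thetaA a u + sympForm u c ^ 2 * (thetaA a c + 1) := thetaA_transvection_eq_add a c u
    _ = thetaA a u + ((s + 1) * sympForm u c) ^ 2 := by
        rw [← hs, mul_pow, CharTwo.add_sq, one_pow]; ring
    _ = thetaA (a + (s + 1) • c) u := by rw [thetaA_add_right, sympForm_smul_right]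

/-- The action of the transvection `t_c` on the quadratic form `θ_a` (given by
`θ^x(u) = θ(u x⁻¹)`, noting `t_c⁻¹ = t_c`) satisfies
`θ_a^{t_c} = θ_{a + (√(θ_a(c)) + 1) c}`, where `s = √(θ_a(c))` is the unique square root
in characteristic 2. -/
theorem thetaA_transvection {K : Type*} [Field K] [Fintype K] [CharP K 2] (m : ℕ)
    (a c : (Fin m ⊕ Fin m) → K) (s : K) (hs : s ^ 2 = thetaA a c) :
    ∀ u, thetaA a (transvection c u) = thetaA (a + (s + 1) • c) u :=
  thetaA_transvection_general m a c s hs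
end
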